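/- arXiv:2108.02196 — 3 statements merged into one kernel-verified Lean document; each statement's English description precedes it below -/
import Mathlib

section
/- Let A_1,…,A_n be arbitrary (possibly dependent) real random variables and X_1,…,X_n be independent absolutely continuous random variables, independent of (A_1,…,A_n), with densities bounded by Λ_1,…,Λ_n. Then Z = Σ_{i=1}^n |A_i + X_i| has a density bounded above by 2 min_i Λ_i. -/
open MeasureTheory ProbabilityTheory

lemma abs_shift_measure_le (f : ℝ → ℝ) (hf0 : ∀ x, 0 ≤ f x) (Λ : ℝ)
    (hfΛ : ∀ x, f x ≤ Λ) (a b : ℝ) (s : Set ℝ) (hs : MeasurableSet s) :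
    (volume.withDensity (fun x => ENNReal.ofReal (f x))) {x | |a + x| + b ∈ s}
      ≤ ENNReal.ofReal (2 * Λ) * volume s := by
  have hΛ0 : 0 ≤ Λ := le_trans (hf0 0) (hfΛ 0)
  have hE : MeasurableSet {x : ℝ | |a + x| + b ∈ s} := by
    exact ((measurable_const.add measurable_id).abs.add measurable_const) hs
  have hvol : volume {x : ℝ | |a + x| + b ∈ s} ≤ 2 * volume s := by
    have hsub : {x : ℝ | |a + x| + b ∈ s} ⊆
        ((fun x => a + x + b) ⁻¹' s) ∪ ((fun x => -(a + x) + b) ⁻¹' s) := by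
      intro x hx
      rcases abs_cases (a + x) with ⟨h, _⟩ | ⟨h, _⟩
      · left; simpa [h] using hx
      · right; simpa [h] using hx
    have h1 : MeasurePreserving (fun x : ℝ => a + x + b) volume volume :=
      (measurePreserving_add_right volume b).comp (measurePreserving_add_left volume a)
    have h2 : MeasurePreserving (fun x : ℝ => -(a + x) + b) volume volume :=
      ((measurePreserving_add_right volume b).comp (Measure.measurePreserving_neg volume)).comp
        (measurePreserving_add_left volume a)
    calc volume {x : ℝ | |a + x| + b ∈ s}
        ≤ volume (((fun x => a + x + b) ⁻¹' s) ∪ ((fun x => -(a + x) + b) ⁻¹' s)) :=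
          measure_mono hsub
      _ ≤ volume ((fun x => a + x + b) ⁻¹' s) + volume ((fun x => -(a + x) + b) ⁻¹' s) :=
          measure_union_le _ _
      _ = volume s + volume s := by rw [h1.measure_preimage hs.nullMeasurableSet,
          h2.measure_preimage hs.nullMeasurableSet]
      _ = 2 * volume s := (two_mul _).symm
  calc (volume.withDensity (fun x => ENNReal.ofReal (f x))) {x | |a + x| + b ∈ s}
      = ∫⁻ x in {x | |a + x| + b ∈ s}, ENNReal.ofReal (f x) := withDensity_apply _ hE
    _ ≤ ∫⁻ _ in {x | |a + x| + b ∈ s}, ENNReal.ofReal Λ :=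
        setLIntegral_mono measurable_const fun x _ => ENNReal.ofReal_le_ofReal (hfΛ x)
    _ = ENNReal.ofReal Λ * volume {x | |a + x| + b ∈ s} := by
        rw [setLIntegral_const, mul_comm]
    _ ≤ ENNReal.ofReal Λ * (2 * volume s) := mul_le_mul_right hvol _
    _ = ENNReal.ofReal (2 * Λ) * volume s := by
        rw [ENNReal.ofReal_mul (by norm_num : (0:ℝ) ≤ 2)]
        simp only [ENNReal.ofReal_ofNat]; ring

lemma map_fun_eq_pi {Ω : Type*} [MeasurableSpace Ω] (P : Measure Ω) [IsProbabilityMeasure P]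
    {n : ℕ} (X : Fin n → Ω → ℝ) (hX : ∀ i, Measurable (X i))
    (h : iIndepFun X P) :
    Measure.map (fun ω i => X i ω) P = Measure.pi (fun i => Measure.map (X i) P) := by
  have hinst : ∀ i, IsProbabilityMeasure (Measure.map (X i) P) :=
    fun i => Measure.isProbabilityMeasure_map (hX i).aemeasurable
  have : ∀ i, SigmaFinite (Measure.map (X i) P) := fun i => by have := hinst i; infer_instance
  refine (Measure.pi_eq fun s hs => ?_).symm
  have hmeas : Measurable (fun ω i => X i ω) := measurable_pi_iff.2 hX
  rw [Measure.map_apply hmeas (MeasurableSet.univ_pi hs)]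
  have hpre : (fun ω i => X i ω) ⁻¹' (Set.pi Set.univ s) = ⋂ i ∈ Finset.univ, X i ⁻¹' s i := by
    ext ω; simp [Set.mem_pi]
  rw [hpre, h.measure_inter_preimage_eq_mul Finset.univ (fun i _ => hs i)]
  exact Finset.prod_congr rfl fun i _ => (Measure.map_apply (hX i) (hs i)).symm

/-- A_1,…,A_n arbitrary random variables; X_1,…,X_n independent continuous
random variables, independent of (A_1,…,A_n), with densities bounded by Λ_1,…,Λ_n.
Then Z = Σ_i |A_i + X_i| has a density bounded above by 2 min_i Λ_i. -/
theorem sum_abs_shift_density_bound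
    {Ω : Type*} [MeasurableSpace Ω] (P : Measure Ω) [IsProbabilityMeasure P]
    (n : ℕ) (hn : 0 < n)
    (A X : Fin n → Ω → ℝ)
    (hA : ∀ i, Measurable (A i)) (hX : ∀ i, Measurable (X i))
    (hXindep : iIndepFun X P)
    (hAXindep : IndepFun (fun ω i => A i ω) (fun ω i => X i ω) P)
    (f : Fin n → ℝ → ℝ) (hf : ∀ i, Measurable (f i)) (hf0 : ∀ i x, 0 ≤ f i x)
    (Λ : Fin n → ℝ) (hfΛ : ∀ i x, f i x ≤ Λ i)
    (hdens : ∀ i, Measure.map (X i) P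
      = volume.withDensity (fun x => ENNReal.ofReal (f i x))) :
    ∃ g : ℝ → ℝ, Measurable g ∧ (∀ v, 0 ≤ g v) ∧ (∀ v, g v ≤ 2 * ⨅ i, Λ i) ∧
      Measure.map (fun ω => ∑ i, |A i ω + X i ω|) P
        = volume.withDensity (fun v => ENNReal.ofReal (g v)) := by
  obtain ⟨m, rfl⟩ : ∃ m, n = m + 1 := ⟨n - 1, (Nat.succ_pred_eq_of_pos hn).symm⟩
  set μ : Fin (m + 1) → Measure ℝ := fun i => Measure.map (X i) P with hμdef
  haveI hinst : ∀ i, IsProbabilityMeasure (μ i) :=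
    fun i => Measure.isProbabilityMeasure_map (hX i).aemeasurable
  -- choose the minimizing index
  obtain ⟨j, -, hj⟩ := Finset.exists_min_image Finset.univ Λ ⟨0, Finset.mem_univ 0⟩
  have hj' : ∀ i, Λ j ≤ Λ i := fun i => hj i (Finset.mem_univ i)
  have hΛj : Λ j = ⨅ i, Λ i :=
    le_antisymm (le_ciInf hj') (ciInf_le (Finite.bddBelow_range Λ) j)
  have hΛj0 : 0 ≤ Λ j := le_trans (hf0 j 0) (hfΛ j 0)
  set c : ℝ := 2 * ⨅ i, Λ i with hcdef
  have hc : c = 2 * Λ j := by rw [hcdef, hΛj]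
  have hc0 : 0 ≤ c := by rw [hc]; positivity
  set Z : Ω → ℝ := fun ω => ∑ i, |A i ω + X i ω| with hZdef
  have hZ : Measurable Z :=
    Finset.measurable_sum _ fun i _ => ((hA i).add (hX i)).abs
  have hA' : Measurable (fun ω i => A i ω) := measurable_pi_iff.2 hA
  have hX' : Measurable (fun ω i => X i ω) := measurable_pi_iff.2 hX
  -- the key bound
  have claim : ∀ s : Set ℝ, MeasurableSet s →
      Measure.map Z P s ≤ ENNReal.ofReal c * volume s := by
    intro s hs
    set F : (Fin (m + 1) → ℝ) × (Fin (m + 1) → ℝ) → ℝ :=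
      fun p => ∑ i, |p.1 i + p.2 i| with hFdef
    have hF : Measurable F :=
      Finset.measurable_sum _ fun i _ =>
        ((measurable_fst.eval.add measurable_snd.eval)).abs
    set G : Ω → (Fin (m + 1) → ℝ) × (Fin (m + 1) → ℝ) :=
      fun ω => (fun i => A i ω, fun i => X i ω) with hGdef
    have hG : Measurable G := hA'.prodMk hX'
    set ν : Measure (Fin (m + 1) → ℝ) := Measure.map (fun ω i => A i ω) P with hνdef
    haveI : IsProbabilityMeasure ν := Measure.isProbabilityMeasure_map hA'.aemeasurable
    haveI : ∀ i, SigmaFinite (μ i) := fun i => by have := hinst i; infer_instance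
    have hmapG : Measure.map G P = ν.prod (Measure.pi μ) := by
      rw [← map_fun_eq_pi P X hX hXindep]
      exact (indepFun_iff_map_prod_eq_prod_map_map hA'.aemeasurable hX'.aemeasurable).1 hAXindep
    have hZs : Measure.map Z P s = Measure.map G P (F ⁻¹' s) := by
      rw [Measure.map_apply hZ hs, Measure.map_apply hG (hF hs)]; rfl
    rw [hZs, hmapG, Measure.prod_apply (hF hs)]
    have hinner : ∀ a : Fin (m + 1) → ℝ,
        Measure.pi μ (Prod.mk a ⁻¹' (F ⁻¹' s)) ≤ ENNReal.ofReal c * volume s := by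
      intro a
      have hEmeas : MeasurableSet (Prod.mk a ⁻¹' (F ⁻¹' s)) :=
        (hF.comp (measurable_prodMk_left)) hs
      set e := MeasurableEquiv.piFinSuccAbove (fun _ : Fin (m + 1) => ℝ) j with hedef
      have hmp := measurePreserving_piFinSuccAbove μ j
      set π' := Measure.pi fun i => μ (j.succAbove i) with hπ'def
      haveI : IsProbabilityMeasure π' := by rw [hπ'def]; infer_instance
      have hS : MeasurableSet (e.symm ⁻¹' (Prod.mk a ⁻¹' (F ⁻¹' s))) :=
        e.symm.measurable hEmeas
      have key : Measure.pi μ (Prod.mk a ⁻¹' (F ⁻¹' s))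
          = ((μ j).prod π') (e.symm ⁻¹' (Prod.mk a ⁻¹' (F ⁻¹' s))) := by
        have hpre : ⇑e ⁻¹' (⇑e.symm ⁻¹' (Prod.mk a ⁻¹' (F ⁻¹' s)))
            = Prod.mk a ⁻¹' (F ⁻¹' s) := by
          rw [← Set.preimage_comp, MeasurableEquiv.symm_comp_self, Set.preimage_id]
        conv_lhs => rw [← hpre]
        exact hmp.measure_preimage hS.nullMeasurableSet
      rw [key, Measure.prod_apply_symm hS]
      have hyz : ∀ z : (Fin m → ℝ),
          ((fun y : ℝ => (y, z)) ⁻¹' (e.symm ⁻¹' (Prod.mk a ⁻¹' (F ⁻¹' s))))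
          = {y : ℝ | |a j + y| + (∑ i, |a (j.succAbove i) + z i|) ∈ s} := by
        intro z
        ext y
        simp only [Set.mem_preimage, Set.mem_setOf_eq, hFdef]
        have hsum : ∑ i, |a i + e.symm (y, z) i|
            = |a j + y| + ∑ i, |a (j.succAbove i) + z i| := by
          rw [Fin.sum_univ_succAbove _ j]
          simp [hedef, MeasurableEquiv.piFinSuccAbove_symm_apply, Fin.insertNthEquiv]
        rw [hsum]
      calc ∫⁻ z, (μ j) ((fun y : ℝ => (y, z)) ⁻¹' (e.symm ⁻¹' (Prod.mk a ⁻¹' (F ⁻¹' s)))) ∂π'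
          ≤ ∫⁻ _, ENNReal.ofReal c * volume s ∂π' := by
            refine lintegral_mono fun z => ?_
            rw [hyz z, hμdef]
            simp only []
            rw [hdens j, hc]
            exact abs_shift_measure_le (f j) (hf0 j) (Λ j) (hfΛ j) (a j) _ s hs
        _ = ENNReal.ofReal c * volume s := by
            rw [lintegral_const, measure_univ, mul_one]
    calc ∫⁻ a, Measure.pi μ (Prod.mk a ⁻¹' (F ⁻¹' s)) ∂ν
        ≤ ∫⁻ _, ENNReal.ofReal c * volume s ∂ν := lintegral_mono hinner
      _ = ENNReal.ofReal c * volume s := by rw [lintegral_const, measure_univ, mul_one]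
  -- now conclude via Radon–Nikodym
  set ρ := Measure.map Z P with hρdef
  haveI : IsProbabilityMeasure ρ := Measure.isProbabilityMeasure_map hZ.aemeasurable
  have hac : ρ ≪ volume := by
    refine Measure.AbsolutelyContinuous.mk fun s hs h0 => ?_
    have := claim s hs
    rw [h0, mul_zero] at this
    exact le_antisymm this zero_le
  have hrd : volume.withDensity (ρ.rnDeriv volume) = ρ :=
    Measure.withDensity_rnDeriv_eq ρ volume hac
  have hbound : (ρ.rnDeriv volume) ≤ᵐ[volume] fun _ => ENNReal.ofReal c := by
    refine ae_le_of_forall_setLIntegral_le_of_sigmaFinite₀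
      (Measure.measurable_rnDeriv ρ volume).aemeasurable fun s hs _ => ?_
    rw [setLIntegral_const]
    calc ∫⁻ x in s, ρ.rnDeriv volume x ≤ ρ s := by
          rw [← withDensity_apply _ hs]
          exact Measure.le_iff'.1 (Measure.withDensity_rnDeriv_le ρ volume) s
      _ ≤ ENNReal.ofReal c * volume s := claim s hs
  refine ⟨fun v => min ((ρ.rnDeriv volume v).toReal) c, ?_, ?_, ?_, ?_⟩
  · exact (Measure.measurable_rnDeriv ρ volume).ennreal_toReal.min measurable_const
  · exact fun v => le_min ENNReal.toReal_nonneg hc0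
  · exact fun v => min_le_right _ _
  · have hae : (fun v => ENNReal.ofReal (min ((ρ.rnDeriv volume v).toReal) c))
        =ᵐ[volume] ρ.rnDeriv volume := by
      filter_upwards [hbound] with v hv
      have hne : ρ.rnDeriv volume v ≠ ⊤ := (lt_of_le_of_lt hv ENNReal.ofReal_lt_top).ne
      have htr : (ρ.rnDeriv volume v).toReal ≤ c := by
        have := ENNReal.toReal_mono (ENNReal.ofReal_lt_top).ne hv
        rwa [ENNReal.toReal_ofReal hc0] at this
      rw [min_eq_left htr, ENNReal.ofReal_toReal hne]
    exact hrd.symm.trans (withDensity_congr_ae hae.symm)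
end

section
/- Let w, v ∈ ℝ^J with w_j, v_j ≥ 0, Σ_j w_j = Σ_j v_j = 1, and suppose the weighted average Z = Σ_j w_j X_j − Σ_j v_j X_j of independent continuous random variables X_1,…,X_J, each with density bounded by κ, has a density. Then the density of Z is bounded above by (J/2)κ, provided each of w and v puts weight on disjoint sets of indices (w_j v_j = 0 for all j). -/
open MeasureTheory ProbabilityTheory

/-- If Z = Σ_j w_j X_j − Σ_j v_j X_j with X_1,…,X_J independent continuous
random variables with densities bounded by κ, w, v nonnegative weights summing to one
with disjoint supports (w_j v_j = 0), and Z has a density g, then g ≤ (J/2)κ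
(almost everywhere). -/
theorem weighted_difference_density_bound
    {Ω : Type*} [MeasurableSpace Ω] (P : Measure Ω) [IsProbabilityMeasure P]
    (J : ℕ) (X : Fin J → Ω → ℝ) (hX : ∀ j, Measurable (X j))
    (hindep : iIndepFun X P)
    (f : Fin J → ℝ → ℝ) (hf : ∀ j, Measurable (f j)) (hf0 : ∀ j x, 0 ≤ f j x)
    (κ : ℝ) (hfκ : ∀ j x, f j x ≤ κ)
    (hdens : ∀ j, Measure.map (X j) P
      = volume.withDensity (fun x => ENNReal.ofReal (f j x)))
    (w v : Fin J → ℝ) (hw0 : ∀ j, 0 ≤ w j) (hv0 : ∀ j, 0 ≤ v j)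
    (hw1 : ∑ j, w j = 1) (hv1 : ∑ j, v j = 1)
    (hdisj : ∀ j, w j * v j = 0)
    (g : ℝ → ℝ) (hg : Measurable g) (hg0 : ∀ x, 0 ≤ g x)
    (hgdens : Measure.map (fun ω => (∑ j, w j * X j ω) - ∑ j, v j * X j ω) P
      = volume.withDensity (fun x => ENNReal.ofReal (g x))) :
    ∀ᵐ x ∂(volume : Measure ℝ), g x ≤ (J : ℝ) / 2 * κ := by
  classical
  -- J > 0
  have hJpos : 0 < J := by
    rcases Nat.eq_zero_or_pos J with h | h
    · subst h; simp at hw1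
    · exact h
  have hJR : (0 : ℝ) < (J : ℝ) := by exact_mod_cast hJpos
  -- the coefficients
  set c : Fin J → ℝ := fun j => w j - v j with hcdef
  have habs : ∀ j, |c j| = w j + v j := by
    intro j
    rcases mul_eq_zero.1 (hdisj j) with h | h
    · simp only [hcdef, h, zero_sub, abs_neg, abs_of_nonneg (hv0 j), zero_add]
    · simp only [hcdef, h, sub_zero, abs_of_nonneg (hw0 j), add_zero]
  have hsum : ∑ j, |c j| = 2 := by
    simp only [habs, Finset.sum_add_distrib, hw1, hv1]; norm_num
  -- find a big coefficient
  obtain ⟨j0, -, hj0⟩ : ∃ j ∈ Finset.univ, 2 / (J : ℝ) ≤ |c j| := by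
    apply Finset.exists_le_of_sum_le (Finset.univ_nonempty_iff.2 ⟨⟨0, hJpos⟩⟩)
    rw [hsum, Finset.sum_const, Finset.card_univ, Fintype.card_fin, nsmul_eq_mul]
    rw [mul_div_cancel₀ _ (ne_of_gt hJR)]
  have hc0 : c j0 ≠ 0 := by
    intro h
    rw [h, abs_zero] at hj0
    exact absurd hj0 (not_le.2 (div_pos two_pos hJR))
  have hκ0 : 0 ≤ κ := le_trans (hf0 j0 0) (hfκ j0 0)
  -- the scaled variables
  set Y : Fin J → Ω → ℝ := fun j ω => c j * X j ω with hYdef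
  have hYmeas : ∀ j, Measurable (Y j) := fun j => (hX j).const_mul _
  have hYindep : iIndepFun Y P :=
    hindep.comp (fun j x => c j * x) (fun j => measurable_const_mul _)
  set s : Finset (Fin J) := Finset.univ.erase j0 with hsdef
  set T : Ω → ℝ := fun ω => ∑ j ∈ s, Y j ω with hTdef
  have hTmeas : Measurable T := Finset.measurable_sum _ (fun j _ => hYmeas j)
  have hTY : IndepFun T (Y j0) P := by
    have h := hYindep.indepFun_finsetSum_of_notMem hYmeas (Finset.notMem_erase j0 Finset.univ)
    have hfun : (∑ j ∈ s, Y j) = T := by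
      funext ω; rw [Finset.sum_apply]
    rwa [hfun] at h
  -- Z decomposition
  set Z : Ω → ℝ := fun ω => (∑ j, w j * X j ω) - ∑ j, v j * X j ω with hZdef
  have hZeq : Z = fun ω => T ω + Y j0 ω := by
    funext ω
    simp only [hZdef, hTdef, hYdef, hcdef, ← Finset.sum_sub_distrib, ← sub_mul]
    exact (Finset.sum_erase_add Finset.univ (fun x => (w x - v x) * X x ω) (Finset.mem_univ j0)).symm
  have hZmeas : Measurable Z := by
    rw [hZeq]; exact hTmeas.add (hYmeas j0)
  -- the product structure
  have hmap_pair : P.map (fun ω => (T ω, Y j0 ω)) = (P.map T).prod (P.map (Y j0)) :=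
    (indepFun_iff_map_prod_eq_prod_map_map hTmeas.aemeasurable
      (hYmeas j0).aemeasurable).1 hTY
  have hZmap : P.map Z = ((P.map T).prod (P.map (Y j0))).map (fun p : ℝ × ℝ => p.1 + p.2) := by
    rw [← hmap_pair, Measure.map_map measurable_add (hTmeas.prodMk (hYmeas j0)), hZeq]
    rfl
  have hPT : IsProbabilityMeasure (P.map T) := Measure.isProbabilityMeasure_map hTmeas.aemeasurable
  -- density bound for Y j0
  set M : ℝ := (J : ℝ) / 2 * κ with hMdef
  have hM0 : 0 ≤ M := mul_nonneg (by positivity) hκ0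
  have hYbound : ∀ B : Set ℝ, MeasurableSet B →
      (P.map (Y j0)) B ≤ ENNReal.ofReal M * volume B := by
    intro B hB
    have hmapY : P.map (Y j0) = (P.map (X j0)).map (c j0 * ·) := by
      rw [Measure.map_map (measurable_const_mul _) (hX j0)]
      rfl
    rw [hmapY, hdens j0, Measure.map_apply (measurable_const_mul _) hB,
      withDensity_apply _ ((measurable_const_mul _) hB)]
    calc ∫⁻ x in (c j0 * ·) ⁻¹' B, ENNReal.ofReal (f j0 x) ∂volume
        ≤ ∫⁻ _ in (c j0 * ·) ⁻¹' B, ENNReal.ofReal κ ∂volume :=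
          setLIntegral_mono measurable_const
            (fun x _ => ENNReal.ofReal_le_ofReal (hfκ j0 x))
      _ = ENNReal.ofReal κ * volume ((c j0 * ·) ⁻¹' B) := by
          rw [setLIntegral_const]
      _ = ENNReal.ofReal κ * (ENNReal.ofReal |(c j0)⁻¹| * volume B) := by
          rw [Real.volume_preimage_mul_left hc0 B]
      _ ≤ ENNReal.ofReal M * volume B := by
          rw [← mul_assoc, ← ENNReal.ofReal_mul hκ0]
          refine mul_le_mul_left (ENNReal.ofReal_le_ofReal ?_) _
          have h1 : |(c j0)⁻¹| ≤ (J : ℝ) / 2 := by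
            rw [abs_inv]
            rw [inv_le_comm₀ (lt_of_lt_of_le (div_pos two_pos hJR) hj0) (by positivity)]
            rwa [inv_div]
          calc κ * |(c j0)⁻¹| ≤ κ * ((J : ℝ) / 2) := by
                exact mul_le_mul_of_nonneg_left h1 hκ0
            _ = M := by rw [hMdef]; ring
  -- bound for Z
  have hZbound : ∀ B : Set ℝ, MeasurableSet B →
      (P.map Z) B ≤ ENNReal.ofReal M * volume B := by
    intro B hB
    rw [hZmap, Measure.map_apply measurable_add hB, Measure.prod_apply (measurable_add hB)]
    have hslice : ∀ t : ℝ, (Prod.mk t ⁻¹' ((fun p : ℝ × ℝ => p.1 + p.2) ⁻¹' B))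
        = (t + ·) ⁻¹' B := by intro t; rfl
    calc ∫⁻ t, (P.map (Y j0)) (Prod.mk t ⁻¹' ((fun p : ℝ × ℝ => p.1 + p.2) ⁻¹' B)) ∂(P.map T)
        ≤ ∫⁻ _, ENNReal.ofReal M * volume B ∂(P.map T) := by
          refine lintegral_mono (fun t => ?_)
          rw [hslice t]
          calc (P.map (Y j0)) ((t + ·) ⁻¹' B)
              ≤ ENNReal.ofReal M * volume ((t + ·) ⁻¹' B) :=
                hYbound _ (measurable_const_add t hB)
            _ = ENNReal.ofReal M * volume B := by
                rw [measure_preimage_add volume t B]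
      _ = ENNReal.ofReal M * volume B := by
          rw [lintegral_const, measure_univ, mul_one]
  -- conclude
  have hae : (fun x => ENNReal.ofReal (g x)) ≤ᵐ[volume]
      (fun _ => ENNReal.ofReal M) := by
    refine ae_le_of_forall_setLIntegral_le_of_sigmaFinite₀
      (hg.ennreal_ofReal.aemeasurable) (fun B hB _ => ?_)
    have h1 : ∫⁻ x in B, ENNReal.ofReal (g x) ∂volume = (P.map Z) B := by
      rw [hgdens, withDensity_apply _ hB]
    rw [h1, setLIntegral_const]
    exact hZbound B hB
  filter_upwards [hae] with x hx
  rw [hMdef] at hx ⊢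
  exact (ENNReal.ofReal_le_ofReal_iff hM0).1 hx
end

section
/- Suppose Y^N_{jt} = δ_t + θ_t'Z_j + λ_t'μ_j + ε_{jt} for all j and t in a fitting set ℰ, and weights w*, f ∈ ℝ^J (nonnegative, summing to one) satisfy Σ_j w*_j Z_j = Σ_j f_j Z_j and Σ_j w*_j Y_{jt} = Σ_j f_j Y_{jt} for all t ∈ ℰ. If the T_ℰ × F matrix λ_ℰ of factor loadings has full column rank, then Σ_j w*_j μ_j − Σ_j f_j μ_j = −(λ_ℰ'λ_ℰ)^{-1} λ_ℰ' (Σ_j w*_j ε_j^ℰ − Σ_j f_j ε_j^ℰ). -/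
open Matrix

/-- Under the linear factor model Y_{jt} = δ_t + θ_t'Z_j + λ_t'μ_j + ε_{jt}
for t in the fitting set, if the weights w* and f (nonnegative, summing to one) match
both covariates and fitted-period outcomes, and the factor-loading matrix λ_ℰ has full
column rank, then Σ_j w*_j μ_j − Σ_j f_j μ_j
= −(λ_ℰ'λ_ℰ)⁻¹ λ_ℰ' (Σ_j w*_j ε_j^ℰ − Σ_j f_j ε_j^ℰ). -/
theorem factor_balance_identity
    (J r F TE : ℕ)
    (Z : Fin J → Fin r → ℝ) (μ : Fin J → Fin F → ℝ)
    (δ : Fin TE → ℝ)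
    (θ : Matrix (Fin TE) (Fin r) ℝ) (lam : Matrix (Fin TE) (Fin F) ℝ)
    (ε : Fin J → Fin TE → ℝ)
    (Y : Fin J → Fin TE → ℝ)
    (hmodel : ∀ j t, Y j t
      = δ t + (∑ i, θ t i * Z j i) + (∑ p, lam t p * μ j p) + ε j t)
    (w f : Fin J → ℝ)
    (hw0 : ∀ j, 0 ≤ w j) (hf0 : ∀ j, 0 ≤ f j)
    (hw1 : ∑ j, w j = 1) (hf1 : ∑ j, f j = 1)
    (hZmatch : ∀ i, ∑ j, w j * Z j i = ∑ j, f j * Z j i)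
    (hYmatch : ∀ t, ∑ j, w j * Y j t = ∑ j, f j * Y j t)
    (hrank : lam.rank = F) :
    ((∑ j, w j • μ j) - ∑ j, f j • μ j)
      = -(((lam.transpose * lam)⁻¹ * lam.transpose).mulVec
          ((∑ j, w j • ε j) - ∑ j, f j • ε j)) := by
  set Δμ : Fin F → ℝ := (∑ j, w j • μ j) - ∑ j, f j • μ j with hΔμ
  set Δε : Fin TE → ℝ := (∑ j, w j • ε j) - ∑ j, f j • ε j with hΔε
  -- key: lam.mulVec Δμ = -Δε
  have key : lam.mulVec Δμ = -Δε := by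
    funext t
    have h1 : ∑ j, (w j - f j) * Y j t = 0 := by
      simp only [sub_mul, Finset.sum_sub_distrib, hYmatch t, sub_self]
    have h1' : ∑ j, (w j - f j) *
        (δ t + (∑ i, θ t i * Z j i) + (∑ p, lam t p * μ j p) + ε j t) = 0 := by
      rw [← h1]; exact Finset.sum_congr rfl fun j _ => by rw [hmodel j t]
    have hδ : ∑ j, (w j - f j) * δ t = 0 := by
      rw [← Finset.sum_mul]
      simp [Finset.sum_sub_distrib, hw1, hf1]
    have hθ : ∑ j, (w j - f j) * (∑ i, θ t i * Z j i) = 0 := by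
      simp_rw [Finset.mul_sum, mul_left_comm]
      rw [Finset.sum_comm]
      apply Finset.sum_eq_zero; intro i _
      rw [← Finset.mul_sum]
      have hz : ∑ j, (w j - f j) * Z j i = 0 := by
        simp [sub_mul, Finset.sum_sub_distrib, hZmatch i]
      rw [hz, mul_zero]
    have h2 : ∑ j, (w j - f j) * (∑ p, lam t p * μ j p)
        + ∑ j, (w j - f j) * ε j t = 0 := by
      have h := h1'
      simp only [mul_add, Finset.sum_add_distrib] at h
      rw [hδ, hθ] at h; linarith
    have hμp : ∀ p, Δμ p = ∑ j, (w j - f j) * μ j p := by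
      intro p
      simp [hΔμ, Finset.sum_apply, sub_mul, Finset.sum_sub_distrib]
    have hεt : Δε t = ∑ j, (w j - f j) * ε j t := by
      simp [hΔε, Finset.sum_apply, sub_mul, Finset.sum_sub_distrib]
    show ∑ p, lam t p * Δμ p = -Δε t
    rw [hεt]
    simp_rw [hμp, Finset.mul_sum]
    rw [Finset.sum_comm]
    have : ∀ j : Fin J, ∑ p, lam t p * ((w j - f j) * μ j p)
        = (w j - f j) * ∑ p, lam t p * μ j p := by
      intro j; rw [Finset.mul_sum]; exact Finset.sum_congr rfl fun p _ => by ring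
    simp_rw [this]
    linarith
  have hu : IsUnit (lam.transpose * lam) := by
    have hr : (lam.transpose * lam).rank = F := by
      rw [Matrix.rank_transpose_mul_self, hrank]
    rw [← Matrix.mulVec_surjective_iff_isUnit]
    have : LinearMap.range (lam.transpose * lam).mulVecLin = ⊤ := by
      apply Submodule.eq_top_of_finrank_eq
      simpa [Matrix.rank] using hr
    intro v
    obtain ⟨a, ha⟩ := LinearMap.range_eq_top.mp this v
    exact ⟨a, by rw [← Matrix.mulVecLin_apply]; exact ha⟩
  have hinv : (lam.transpose * lam)⁻¹ * (lam.transpose * lam) = 1 :=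
    Matrix.nonsing_inv_mul _ ((Matrix.isUnit_iff_isUnit_det _).mp hu)
  calc Δμ = ((lam.transpose * lam)⁻¹ * (lam.transpose * lam)).mulVec Δμ := by
        rw [hinv, Matrix.one_mulVec]
    _ = ((lam.transpose * lam)⁻¹ * lam.transpose).mulVec (lam.mulVec Δμ) := by
        rw [Matrix.mulVec_mulVec, Matrix.mul_assoc]
    _ = -(((lam.transpose * lam)⁻¹ * lam.transpose).mulVec Δε) := by
        rw [key, Matrix.mulVec_neg]
end
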